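/- If Y and Z are independent continuous random variables (Y having an atomless distribution), then AUC(c) = P(Y₁ > Y₂ | Z₁ > c, Z₂ ≤ c) = 1/2 for every threshold c with P(Z > c) ∈ (0,1), and consequently AUC_I = ∫ AUC(t) f_c(t) dt = 1/2 for any probability density f_c supported on {t : 0 < P(Z > t) < 1}. -/

import Mathlib

/-!
Since `Y` is independent of `Z`, conditioning on `Z₁ > c, Z₂ ≤ c` does not change the law of
`(Y₁, Y₂)`, so `AUC(c) = P(Y₁ > Y₂)`. For i.i.d. `Y₁, Y₂` with an atomless law this is `1/2`:
`P(Y₁ > Y₂) = P(Y₂ > Y₁)` by symmetry and the two events exhaust the space up to the null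
diagonal. The junk value of `AUC` on a null conditioning event is `1/2` as well, so `AUC ≡ 1/2`
and `AUC_I = 1/2 · ∫ f_c = 1/2`.
-/

open MeasureTheory Set ProbabilityTheory

noncomputable def AUC {Ω : Type*} [MeasurableSpace Ω] (μ : Measure Ω)
    (Y Z : Ω → ℝ) (c : ℝ) : ℝ :=
  if (μ.prod μ) {p : Ω × Ω | Z p.1 > c ∧ Z p.2 ≤ c} = 0 then 1/2
  else ((μ.prod μ) ({p : Ω × Ω | Y p.1 > Y p.2} ∩ {p | Z p.1 > c ∧ Z p.2 ≤ c})).toReal /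
    ((μ.prod μ) {p : Ω × Ω | Z p.1 > c ∧ Z p.2 ≤ c}).toReal

open scoped ENNReal

section Order

variable {α : Type*} [LinearOrder α] [TopologicalSpace α] [OrderClosedTopology α]
  [MeasurableSpace α] [BorelSpace α]

lemma lintegral_measure_Iio_eq_lintegral_measure_Ioi [SecondCountableTopology α] (ν : Measure α)
    [SFinite ν] :
    ∫⁻ x, ν (Iio x) ∂ν = ∫⁻ x, ν (Ioi x) ∂ν := by
  have hS : MeasurableSet {q : α × α | q.2 < q.1} := measurableSet_lt measurable_snd measurable_fst
  calc ∫⁻ x, ν (Iio x) ∂ν = ν.prod ν {q | q.2 < q.1} := (Measure.prod_apply hS).symm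
    _ = ∫⁻ x, ν (Ioi x) ∂ν := Measure.prod_apply_symm hS

lemma measure_Iio_add_measure_Ioi (ν : Measure α) [IsProbabilityMeasure ν] [NullSingletonClass ν]
    (x : α) :
    ν (Iio x) + ν (Ioi x) = 1 := by
  rw [measure_congr Iio_ae_eq_Iic, ← compl_Iic, prob_add_prob_compl measurableSet_Iic]

lemma measurable_measure_Iio (ν : Measure α) : Measurable fun x ↦ ν (Iio x) :=
  Monotone.measurable fun _ _ hab ↦ measure_mono (Iio_subset_Iio hab)

lemma lintegral_measure_Iio_eq_half [SecondCountableTopology α] (ν : Measure α)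
    [IsProbabilityMeasure ν] [NullSingletonClass ν] :
    ∫⁻ x, ν (Iio x) ∂ν = 2⁻¹ := by
  have hsum : ∫⁻ x, ν (Iio x) ∂ν + ∫⁻ x, ν (Ioi x) ∂ν = 1 := by
    rw [← lintegral_add_left (measurable_measure_Iio ν)]
    simp [measure_Iio_add_measure_Ioi]
  rw [← lintegral_measure_Iio_eq_lintegral_measure_Ioi, ← two_mul] at hsum
  exact ENNReal.eq_inv_of_mul_eq_one_left (by rwa [mul_comm] at hsum)

end Order

namespace ProbabilityTheory

variable {Ω α β : Type*} {mΩ : MeasurableSpace Ω} {μ : Measure Ω} [MeasurableSpace α]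
  [MeasurableSpace β] {Z : Ω → β}

lemma IndepFun.setLIntegral_preimage_comp_eq_mul {X : Ω → α} (hXZ : IndepFun X Z μ)
    (hX : Measurable X) (hZ : Measurable Z) {f : α → ℝ≥0∞} (hf : Measurable f) {s : Set β}
    (hs : MeasurableSet s) :
    ∫⁻ ω in Z ⁻¹' s, f (X ω) ∂μ = μ (Z ⁻¹' s) * ∫⁻ ω, f (X ω) ∂μ := by
  have hind : Measurable (s.indicator (1 : β → ℝ≥0∞)) := measurable_one.indicator hs
  have hsplit : (Z ⁻¹' s).indicator (fun ω ↦ f (X ω)) = (s.indicator 1 ∘ Z) * (f ∘ X) := by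
    ext ω
    by_cases h : Z ω ∈ s <;> simp [h]
  rw [← lintegral_indicator (hZ hs), hsplit, lintegral_mul_eq_lintegral_mul_lintegral_of_indepFun
    (hind.comp hZ) (hf.comp hX) (hXZ.symm.comp hind hf), ← lintegral_indicator_one (hZ hs)]
  rfl

variable [LinearOrder α] [TopologicalSpace α] [OrderClosedTopology α] [BorelSpace α]
  [SecondCountableTopology α]

lemma IndepFun.prod_lt_inter_prod_preimage_eq_half_mul [IsProbabilityMeasure μ] {Y : Ω → α}
    (hYZ : IndepFun Y Z μ) (hY : Measurable Y) (hZ : Measurable Z) [NullSingletonClass (μ.map Y)]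
    {s t : Set β} (hs : MeasurableSet s) (ht : MeasurableSet t) :
    μ.prod μ ({p | Y p.2 < Y p.1} ∩ ((Z ⁻¹' s) ×ˢ (Z ⁻¹' t))) =
      2⁻¹ * (μ (Z ⁻¹' s) * μ (Z ⁻¹' t)) := by
  have hE : MeasurableSet ({p : Ω × Ω | Y p.2 < Y p.1} ∩ ((Z ⁻¹' s) ×ˢ (Z ⁻¹' t))) :=
    (measurableSet_lt (hY.comp measurable_snd) (hY.comp measurable_fst)).inter
      ((hZ hs).prod (hZ ht))
  have hfiber : ∀ ω, μ (Prod.mk ω ⁻¹' ({p | Y p.2 < Y p.1} ∩ ((Z ⁻¹' s) ×ˢ (Z ⁻¹' t)))) =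
      (Z ⁻¹' s).indicator (fun ω ↦ μ.map Y (Iio (Y ω)) * μ (Z ⁻¹' t)) ω := by
    intro ω
    by_cases h : Z ω ∈ s
    · have hfib : Prod.mk ω ⁻¹' ({p | Y p.2 < Y p.1} ∩ ((Z ⁻¹' s) ×ˢ (Z ⁻¹' t))) =
          Y ⁻¹' Iio (Y ω) ∩ Z ⁻¹' t := by
        ext ω'
        simp [h]
      rw [hfib, hYZ.measure_inter_preimage_eq_mul _ _ measurableSet_Iio ht,
        indicator_of_mem (show ω ∈ Z ⁻¹' s from h), Measure.map_apply hY measurableSet_Iio]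
    · have hfib : Prod.mk ω ⁻¹' ({p | Y p.2 < Y p.1} ∩ ((Z ⁻¹' s) ×ˢ (Z ⁻¹' t))) = ∅ := by
        ext ω'
        simp [h]
      rw [hfib, indicator_of_notMem (show ω ∉ Z ⁻¹' s from h), measure_empty]
  have := Measure.isProbabilityMeasure_map (μ := μ) hY.aemeasurable
  rw [Measure.prod_apply hE, lintegral_congr hfiber, lintegral_indicator (hZ hs),
    lintegral_mul_const' _ _ (measure_ne_top _ _),
    hYZ.setLIntegral_preimage_comp_eq_mul hY hZ (measurable_measure_Iio _) hs,
    ← lintegral_map (measurable_measure_Iio _) hY, lintegral_measure_Iio_eq_half]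
  ring

end ProbabilityTheory

lemma AUC_eq_half {Ω : Type*} [MeasurableSpace Ω] {μ : Measure Ω} [IsProbabilityMeasure μ]
    {Y Z : Ω → ℝ} (hY : Measurable Y) (hZ : Measurable Z) (hYZ : IndepFun Y Z μ)
    [NullSingletonClass (μ.map Y)] (c : ℝ) :
    AUC μ Y Z c = 1 / 2 := by
  have hrect : {p : Ω × Ω | Z p.1 > c ∧ Z p.2 ≤ c} = (Z ⁻¹' Ioi c) ×ˢ (Z ⁻¹' Iic c) := rfl
  have hlt : {p : Ω × Ω | Y p.1 > Y p.2} = {p | Y p.2 < Y p.1} := rfl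
  have hnum := hYZ.prod_lt_inter_prod_preimage_eq_half_mul hY hZ (measurableSet_Ioi (a := c))
    (measurableSet_Iic (a := c))
  rw [← Measure.prod_prod] at hnum
  rw [AUC, hrect, hlt, hnum]
  split_ifs with h
  · rfl
  · rw [ENNReal.toReal_mul, mul_div_assoc,
      div_self (ENNReal.toReal_ne_zero.2 ⟨h, measure_ne_top _ _⟩)]
    norm_num

theorem auc_of_indep_eq_half_general {Ω : Type*} [MeasurableSpace Ω] (μ : Measure Ω)
    [IsProbabilityMeasure μ] (Y Z : Ω → ℝ) (hY : Measurable Y) (hZ : Measurable Z)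
    (hindep : IndepFun Y Z μ) (hatomless : ∀ y : ℝ, μ {ω | Y ω = y} = 0)
    (f : ℝ → ℝ) (hf_int : ∫ t, f t = 1) :
    (∀ c, 0 < μ {ω | Z ω > c} → μ {ω | Z ω > c} < 1 → AUC μ Y Z c = 1/2) ∧
      ∫ t, AUC μ Y Z t * f t = 1/2 := by
  have : NullSingletonClass (μ.map Y) :=
    ⟨fun y ↦ by rw [Measure.map_apply hY (measurableSet_singleton y)]; exact hatomless y⟩
  have hAUC := AUC_eq_half hY hZ hindep
  refine ⟨fun c _ _ ↦ hAUC c, ?_⟩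
  simp only [hAUC, integral_const_mul, hf_int]
  norm_num

/-- If `Y` and `Z` are independent and `Y` has an atomless distribution, then
`AUC(c) = 1/2` for every `c` with `0 < P(Z > c) < 1`, and consequently
`AUC_I = ∫ AUC(t) f_c(t) dt = 1/2` for any probability density `f_c` supported on
`{t : 0 < P(Z > t) < 1}`. -/
theorem auc_of_indep_eq_half {Ω : Type*} [MeasurableSpace Ω] (μ : Measure Ω)
    [IsProbabilityMeasure μ] (Y Z : Ω → ℝ) (hY : Measurable Y) (hZ : Measurable Z)
    (hindep : IndepFun Y Z μ) (hatomless : ∀ y : ℝ, μ {ω | Y ω = y} = 0)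
    (f : ℝ → ℝ) (hf_nonneg : ∀ t, 0 ≤ f t) (hf_int : ∫ t, f t = 1)
    (hf_supp : ∀ t, f t ≠ 0 → 0 < μ {ω | Z ω > t} ∧ μ {ω | Z ω > t} < 1) :
    (∀ c, 0 < μ {ω | Z ω > c} → μ {ω | Z ω > c} < 1 → AUC μ Y Z c = 1/2) ∧
      ∫ t, AUC μ Y Z t * f t = 1/2 :=
  auc_of_indep_eq_half_general μ Y Z hY hZ hindep hatomless f hf_int
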